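/- arXiv:2405.09727 — 2 statements merged into one kernel-verified Lean document; each statement's English description precedes it below -/
import Mathlib

section
/- Let G be a hypergraph and let G_1, G_2 be section hypergraphs of G such that G_1 ∪ G_2 = G and G_1 ∩ G_2 is a complete hypergraph. Then the multilinear set S(G) is decomposable into S(G_1) and S(G_2); that is, the multilinear polytope MP(G) equals the set of points z (in the coordinates of G) whose restriction to the coordinates of G_1 lies in MP(G_1) and whose restriction to the coordinates of G_2 lies in MP(G_2). -/
open Finset

/-- The multilinear set of the hypergraph with node set `Vset` and edge set `E`. -/
def MultilinearSet {V : Type} [DecidableEq V] (Vset : Finset V) (E : Finset (Finset V)) :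
    Set (Finset V → ℝ) :=
  {z | ∃ x : V → ℝ, (∀ v ∈ Vset, x v = 0 ∨ x v = 1) ∧ (∀ v ∈ Vset, z {v} = x v) ∧
        ∀ e ∈ E, z e = ∏ v ∈ e, x v}

/-!
A point of `conv S(Gᵢ)` agrees, on the coordinates of `Gᵢ`, with a mixture of 0/1 points, i.e.
with a probability distribution on subsets of `Vᵢ`. Since `G₁ ∩ G₂` is complete, `z` prescribes
every monomial on the overlap `I = V₁ ∩ V₂`, and by inclusion–exclusion these moments determine
the distribution of the trace `A ∩ I`. The two distributions therefore have the same marginal on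
`I`, and coupling them conditionally independently given that marginal yields a distribution on
subsets of `V₁ ∪ V₂` that represents `z` on every coordinate of `G`.
-/

theorem exists_coupling {ι κ K : Type*} [Fintype ι] [Fintype κ] [DecidableEq K]
    {w : ι → ℝ} {u : κ → ℝ} (hw : ∀ i, 0 ≤ w i) (hu : ∀ j, 0 ≤ u j) (f : ι → K) (g : κ → K)
    (h : ∀ k, ∑ i with f i = k, w i = ∑ j with g j = k, u j) :
    ∃ ν : ι × κ → ℝ, (∀ q, 0 ≤ ν q) ∧ (∀ q, ν q ≠ 0 → f q.1 = g q.2) ∧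
      (∀ i, ∑ j, ν (i, j) = w i) ∧ ∀ j, ∑ i, ν (i, j) = u j := by
  set m : K → ℝ := fun k => ∑ j with g j = k, u j
  have hwm : ∀ i, w i ≤ m (f i) := fun i =>
    (single_le_sum (fun i _ => hw i) (by simp)).trans_eq (h (f i))
  have hum : ∀ j, u j ≤ m (g j) := fun j => single_le_sum (fun j _ => hu j) (by simp)
  refine ⟨fun q => if f q.1 = g q.2 then w q.1 * u q.2 / m (g q.2) else 0, fun q => ?_,
    fun q hq => by_contra fun hne => hq (if_neg hne), fun i => ?_, fun j => ?_⟩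
  · dsimp only
    split_ifs
    · exact div_nonneg (mul_nonneg (hw _) (hu _)) ((hu _).trans (hum _))
    · exact le_rfl
  · calc ∑ j, (if f i = g j then w i * u j / m (g j) else 0)
        = ∑ j with g j = f i, w i * u j / m (f i) := by
          rw [sum_filter]
          refine sum_congr rfl fun j _ => ?_
          by_cases hij : g j = f i
          · rw [if_pos hij.symm, if_pos hij, hij]
          · rw [if_neg (Ne.symm hij), if_neg hij]
      _ = w i * m (f i) / m (f i) := by simp only [m, mul_sum, sum_div]
      -- `m (f i) = 0` forces `w i = 0`, so dividing by zero is harmless.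
      _ = w i := mul_div_cancel_of_imp fun h0 => le_antisymm (h0 ▸ hwm i) (hw i)
  · calc ∑ i, (if f i = g j then w i * u j / m (g j) else 0)
        = ∑ i with f i = g j, u j * w i / m (g j) := by
          rw [sum_filter]; exact sum_congr rfl fun i _ => by split_ifs <;> ring
      _ = u j * m (g j) / m (g j) := by simp only [m, ← h, mul_sum, sum_div]
      _ = u j := mul_div_cancel_of_imp fun h0 => le_antisymm (h0 ▸ hum j) (hu j)

section Cylinder

open scoped Pointwise

variable {𝕜 ι E : Type*} [Field 𝕜] [LinearOrder 𝕜] [IsStrictOrderedRing 𝕜] [AddCommGroup E]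
  [Module 𝕜 E]

lemma setOf_exists_eqOn_eq_add (P : Set (ι → E)) (C : Set ι) :
    {z | ∃ p ∈ P, Set.EqOn z p C} = P + {d : ι → E | ∀ i ∈ C, d i = 0} := by
  ext z
  refine ⟨fun ⟨p, hp, hzp⟩ =>
    ⟨p, hp, z - p, fun i hi => sub_eq_zero.2 (hzp hi), add_sub_cancel _ _⟩, ?_⟩
  rintro ⟨p, hp, d, hd, rfl⟩
  exact ⟨p, hp, fun i hi => by simp [hd i hi]⟩

theorem convexHull_setOf_exists_eqOn (P : Set (ι → E)) (C : Set ι) :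
    convexHull 𝕜 {z | ∃ p ∈ P, Set.EqOn z p C} = {z | ∃ p ∈ convexHull 𝕜 P, Set.EqOn z p C} := by
  have hconvex : Convex 𝕜 {d : ι → E | ∀ i ∈ C, d i = 0} :=
    fun x hx y hy a b _ _ _ i hi => by simp [hx i hi, hy i hi]
  rw [setOf_exists_eqOn_eq_add, setOf_exists_eqOn_eq_add, convexHull_add, hconvex.convexHull_eq]

end Cylinder

section Monomials

variable {V : Type*} [DecidableEq V]

/-- The 0/1 point with support `A`, evaluated on all monomials `∏ v ∈ e, x v`. -/
def monomialVector (A : Finset V) : Finset V → ℝ := fun e => if e ⊆ A then 1 else 0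

lemma monomialVector_union_apply {V₁ V₂ A B e : Finset V} (hB : B ⊆ V₂)
    (hAB : A ∩ (V₁ ∩ V₂) = B ∩ (V₁ ∩ V₂)) (he : e ⊆ V₁) :
    monomialVector (A ∪ B) e = monomialVector A e := by
  have hBA : ∀ v ∈ B, v ∈ V₁ → v ∈ A := fun v hvB hv₁ => by
    have hv : v ∈ B ∩ (V₁ ∩ V₂) := mem_inter.2 ⟨hvB, mem_inter.2 ⟨hv₁, hB hvB⟩⟩
    rw [← hAB] at hv
    exact (mem_inter.1 hv).1
  have hsub : e ⊆ A ∪ B ↔ e ⊆ A := ⟨fun h v hv =>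
    (mem_union.1 (h hv)).elim id fun hvB => hBA v hvB (he hv), fun h => h.trans subset_union_left⟩
  simp only [monomialVector, hsub]

lemma sum_powerset_sdiff_neg_one_pow_mul_monomialVector {S I : Finset V} (A : Finset V)
    (hS : S ⊆ I) :
    ∑ T ∈ (I \ S).powerset, (-1 : ℝ) ^ T.card * monomialVector A (S ∪ T) =
      if A ∩ I = S then 1 else 0 := by
  by_cases hSA : S ⊆ A
  · have hfilter : (I \ S).powerset.filter (· ⊆ A) = ((I \ S) ∩ A).powerset := by
      ext T; simp only [mem_filter, mem_powerset, subset_inter_iff]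
    have hpattern : (I \ S) ∩ A = ∅ ↔ A ∩ I = S := by
      simp only [Finset.ext_iff, mem_inter, mem_sdiff, notMem_empty, iff_false]
      grind
    calc ∑ T ∈ (I \ S).powerset, (-1 : ℝ) ^ T.card * monomialVector A (S ∪ T)
        = ∑ T ∈ ((I \ S) ∩ A).powerset, (-1 : ℝ) ^ T.card := by
          rw [← hfilter, sum_filter]
          refine sum_congr rfl fun T _ => ?_
          simp [monomialVector, union_subset_iff, hSA]
      _ = if (I \ S) ∩ A = ∅ then 1 else 0 := by
          exact_mod_cast sum_powerset_neg_one_pow_card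
      _ = if A ∩ I = S then 1 else 0 := by simp only [hpattern]
  · have hne : A ∩ I ≠ S := fun h => hSA (h ▸ inter_subset_left)
    rw [if_neg hne]
    refine sum_eq_zero fun T _ => ?_
    simp [monomialVector, union_subset_iff, hSA]

lemma sum_filter_inter_eq_alternating_sum {ι : Type*} [Fintype ι] (w : ι → ℝ) (A : ι → Finset V)
    {S I : Finset V} (hS : S ⊆ I) :
    ∑ i with A i ∩ I = S, w i =
      ∑ T ∈ (I \ S).powerset, (-1 : ℝ) ^ T.card * (∑ i, w i • monomialVector (A i)) (S ∪ T) := by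
  simp only [Finset.sum_apply, Pi.smul_apply, smul_eq_mul, mul_sum]
  rw [sum_comm, sum_filter]
  refine sum_congr rfl fun i _ => ?_
  rw [← mul_one (w i), ← mul_zero (w i), ← mul_ite,
    ← sum_powerset_sdiff_neg_one_pow_mul_monomialVector (A i) hS, mul_sum]
  exact sum_congr rfl fun T _ => by ring

lemma exists_sum_smul_monomialVector {W : Finset V} {p : Finset V → ℝ}
    (hp : p ∈ convexHull ℝ (monomialVector '' ↑W.powerset)) :
    ∃ (ι : Type) (_ : Fintype ι) (w : ι → ℝ) (A : ι → Finset V), (∀ i, 0 ≤ w i) ∧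
      ∑ i, w i = 1 ∧ (∀ i, A i ⊆ W) ∧ ∑ i, w i • monomialVector (A i) = p := by
  obtain ⟨ι, _, w, z, hw, hw1, hz, rfl⟩ := mem_convexHull_iff_exists_fintype.1 hp
  choose A hA hAz using hz
  exact ⟨ι, _, w, A, hw, hw1, fun i => mem_powerset.1 (hA i), by simp only [hAz]⟩

lemma apply_empty_of_mem_convexHull {W : Finset V} {p : Finset V → ℝ}
    (hp : p ∈ convexHull ℝ (monomialVector '' ↑W.powerset)) : p ∅ = 1 := by
  obtain ⟨ι, _, w, A, -, hw1, -, rfl⟩ := exists_sum_smul_monomialVector hp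
  simp [monomialVector, hw1]

lemma sum_filter_inter_congr {ι κ : Type*} [Fintype ι] [Fintype κ] {I : Finset V}
    {w : ι → ℝ} {u : κ → ℝ} {A : ι → Finset V} {B : κ → Finset V}
    (h : ∀ e ⊆ I, (∑ i, w i • monomialVector (A i)) e = (∑ j, u j • monomialVector (B j)) e)
    (S : Finset V) : ∑ i with A i ∩ I = S, w i = ∑ j with B j ∩ I = S, u j := by
  by_cases hS : S ⊆ I
  · rw [sum_filter_inter_eq_alternating_sum w A hS, sum_filter_inter_eq_alternating_sum u B hS]
    exact sum_congr rfl fun T hT => by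
      rw [h _ (union_subset hS ((mem_powerset.1 hT).trans sdiff_subset))]
  · have hpattern : ∀ C : Finset V, C ∩ I ≠ S := fun C hC => hS (hC ▸ inter_subset_right)
    simp [hpattern]

theorem exists_mem_convexHull_union_of_eqOn_inter {V₁ V₂ : Finset V} {p₁ p₂ : Finset V → ℝ}
    (hp₁ : p₁ ∈ convexHull ℝ (monomialVector '' ↑V₁.powerset))
    (hp₂ : p₂ ∈ convexHull ℝ (monomialVector '' ↑V₂.powerset))
    (h : ∀ e ⊆ V₁ ∩ V₂, p₁ e = p₂ e) :
    ∃ p ∈ convexHull ℝ (monomialVector '' ↑(V₁ ∪ V₂).powerset),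
      (∀ e ⊆ V₁, p e = p₁ e) ∧ ∀ e ⊆ V₂, p e = p₂ e := by
  obtain ⟨ι, _, w, A, hw, hw1, hA, rfl⟩ := exists_sum_smul_monomialVector hp₁
  obtain ⟨κ, _, u, B, hu, -, hB, rfl⟩ := exists_sum_smul_monomialVector hp₂
  obtain ⟨ν, hν, hνAB, hνw, hνu⟩ := exists_coupling hw hu _ _ (sum_filter_inter_congr h)
  have hfst : ∑ i, w i • monomialVector (A i) = ∑ q, ν q • monomialVector (A q.1) := by
    simp only [Fintype.sum_prod_type, ← sum_smul, hνw]
  have hsnd : ∑ j, u j • monomialVector (B j) = ∑ q, ν q • monomialVector (B q.2) := by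
    simp only [Fintype.sum_prod_type_right, ← sum_smul, hνu]
  refine ⟨∑ q, ν q • monomialVector (A q.1 ∪ B q.2),
    mem_convexHull_of_exists_fintype ν _ hν ?_ ?_ rfl, fun e he => ?_, fun e he => ?_⟩
  · simp only [Fintype.sum_prod_type, hνw, hw1]
  · exact fun q => ⟨_, mem_powerset.2 (union_subset_union (hA _) (hB _)), rfl⟩
  · rw [hfst, Finset.sum_apply, Finset.sum_apply]
    refine sum_congr rfl fun q _ => ?_
    rcases eq_or_ne (ν q) 0 with hq | hq
    · simp [hq]
    · simp only [Pi.smul_apply, monomialVector_union_apply (hB _) (hνAB q hq) he]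
  · rw [hsnd, Finset.sum_apply, Finset.sum_apply]
    refine sum_congr rfl fun q _ => ?_
    rcases eq_or_ne (ν q) 0 with hq | hq
    · simp [hq]
    · have hBA := (hνAB q hq).symm
      rw [inter_comm V₁] at hBA
      simp only [Pi.smul_apply, union_comm (A q.1), monomialVector_union_apply (hA _) hBA he]

end Monomials

section MultilinearSet

variable {V : Type}

def coords (W : Finset V) (F : Finset (Finset V)) : Set (Finset V) :=
  {e | e ∈ F ∨ ∃ v ∈ W, e = {v}}

lemma subset_of_mem_coords {W e : Finset V} {F : Finset (Finset V)} (hF : ∀ e ∈ F, e ⊆ W)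
    (he : e ∈ coords W F) : e ⊆ W := by
  rcases he with he | ⟨v, hv, rfl⟩
  exacts [hF e he, singleton_subset_iff.2 hv]

variable [DecidableEq V]

lemma prod_ite_mem_eq_monomialVector (A e : Finset V) :
    ∏ v ∈ e, (if v ∈ A then 1 else 0 : ℝ) = monomialVector A e := by
  rw [prod_boole]; rfl

lemma multilinearSet_eq {W : Finset V} {F : Finset (Finset V)} (hF : ∀ e ∈ F, e ⊆ W) :
    MultilinearSet W F = {z | ∃ p ∈ monomialVector '' ↑W.powerset, Set.EqOn z p (coords W F)} := by
  classical
  ext z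
  constructor
  · rintro ⟨x, hbin, hsingle, hedge⟩
    have hprod : ∀ e ⊆ W, ∏ v ∈ e, x v = monomialVector (W.filter (x · = 1)) e := fun e he => by
      rw [← prod_ite_mem_eq_monomialVector]
      refine prod_congr rfl fun v hv => ?_
      rcases hbin v (he hv) with h | h <;> simp [h, he hv]
    refine ⟨_, ⟨W.filter (x · = 1), mem_powerset.2 (filter_subset _ _), rfl⟩, ?_⟩
    rintro e (he | ⟨v, hv, rfl⟩)
    · rw [hedge e he, hprod e (hF e he)]
    · rw [hsingle v hv, ← hprod _ (singleton_subset_iff.2 hv), prod_singleton]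
  · rintro ⟨_, ⟨A, -, rfl⟩, hz⟩
    refine ⟨fun v => if v ∈ A then 1 else 0, fun v _ => ?_, fun v hv => ?_, fun e he => ?_⟩
    · by_cases hv : v ∈ A <;> simp [hv]
    · rw [hz (Or.inr ⟨v, hv, rfl⟩), ← prod_ite_mem_eq_monomialVector, prod_singleton]
    · rw [hz (Or.inl he), prod_ite_mem_eq_monomialVector]

lemma multilinearSet_anti {W W' : Finset V} {F F' : Finset (Finset V)} (hW : W' ⊆ W)
    (hF : F' ⊆ F) : MultilinearSet W F ⊆ MultilinearSet W' F' :=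
  fun _ ⟨x, hbin, hsingle, hedge⟩ =>
    ⟨x, fun v hv => hbin v (hW hv), fun v hv => hsingle v (hW hv), fun e he => hedge e (hF he)⟩

theorem convexHull_multilinearSet {W : Finset V} {F : Finset (Finset V)}
    (hF : ∀ e ∈ F, e ⊆ W) :
    convexHull ℝ (MultilinearSet W F) =
      {z | ∃ p ∈ convexHull ℝ (monomialVector '' ↑W.powerset), Set.EqOn z p (coords W F)} := by
  rw [multilinearSet_eq hF, convexHull_setOf_exists_eqOn]


lemma mem_coords_filter_of_subset {U W e : Finset V} {E : Finset (Finset V)}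
    (hcomplete : ∀ e ⊆ U, 2 ≤ e.card → e ∈ E) (hUW : U ⊆ W) (he : e ⊆ U) (hne : e.Nonempty) :
    e ∈ coords W (E.filter fun e => e ⊆ W) := by
  rcases Nat.lt_or_ge e.card 2 with hcard | hcard
  · have hsingle : e.card = 1 := by have := hne.card_pos; omega
    obtain ⟨v, rfl⟩ := card_eq_one.1 hsingle
    exact Or.inr ⟨v, hUW (he (mem_singleton_self v)), rfl⟩
  · exact Or.inl (mem_filter.2 ⟨hcomplete e he hcard, he.trans hUW⟩)

lemma coords_union_subset {V₁ V₂ : Finset V} {E : Finset (Finset V)}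
    (hE : (E.filter fun e => e ⊆ V₁) ∪ (E.filter fun e => e ⊆ V₂) = E) :
    coords (V₁ ∪ V₂) E ⊆
      coords V₁ (E.filter fun e => e ⊆ V₁) ∪ coords V₂ (E.filter fun e => e ⊆ V₂) := by
  rintro e (he | ⟨v, hv, rfl⟩)
  · rw [← hE, mem_union] at he
    exact he.imp Or.inl Or.inl
  · exact (mem_union.1 hv).imp (fun hv => Or.inr ⟨v, hv, rfl⟩) fun hv => Or.inr ⟨v, hv, rfl⟩

end MultilinearSet

theorem multilinear_polytope_decomposition_general {V : Type} [DecidableEq V]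
    (Vset V1 V2 : Finset V) (E : Finset (Finset V))
    (hsub : ∀ e ∈ E, e ⊆ Vset)
    (hV1 : V1 ⊆ Vset) (hV2 : V2 ⊆ Vset)
    (hVunion : V1 ∪ V2 = Vset)
    (hEunion : (E.filter fun e => e ⊆ V1) ∪ (E.filter fun e => e ⊆ V2) = E)
    (hcomplete : ∀ e : Finset V, e ⊆ V1 ∩ V2 → 2 ≤ e.card → e ∈ E) :
    convexHull ℝ (MultilinearSet Vset E) =
      convexHull ℝ (MultilinearSet V1 (E.filter fun e => e ⊆ V1)) ∩
        convexHull ℝ (MultilinearSet V2 (E.filter fun e => e ⊆ V2)) := by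
  refine subset_antisymm (Set.subset_inter
    (convexHull_mono (multilinearSet_anti hV1 (filter_subset _ _)))
    (convexHull_mono (multilinearSet_anti hV2 (filter_subset _ _)))) ?_
  have hF : ∀ W : Finset V, ∀ e ∈ E.filter fun e => e ⊆ W, e ⊆ W := fun W e he =>
    (mem_filter.1 he).2
  rintro z ⟨hz₁, hz₂⟩
  rw [convexHull_multilinearSet (hF V1)] at hz₁
  rw [convexHull_multilinearSet (hF V2)] at hz₂
  obtain ⟨p₁, hp₁, hzp₁⟩ := hz₁
  obtain ⟨p₂, hp₂, hzp₂⟩ := hz₂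
  have hp₁₂ : ∀ e ⊆ V1 ∩ V2, p₁ e = p₂ e := fun e he => by
    rcases e.eq_empty_or_nonempty with rfl | hne
    · rw [apply_empty_of_mem_convexHull hp₁, apply_empty_of_mem_convexHull hp₂]
    · rw [← hzp₁ (mem_coords_filter_of_subset hcomplete inter_subset_left he hne),
        ← hzp₂ (mem_coords_filter_of_subset hcomplete inter_subset_right he hne)]
  obtain ⟨p, hp, hpp₁, hpp₂⟩ := exists_mem_convexHull_union_of_eqOn_inter hp₁ hp₂ hp₁₂
  rw [convexHull_multilinearSet hsub, ← hVunion]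
  refine ⟨p, hp, fun e he => ?_⟩
  rcases coords_union_subset hEunion he with he₁ | he₂
  · rw [hzp₁ he₁, hpp₁ e (subset_of_mem_coords (hF V1) he₁)]
  · rw [hzp₂ he₂, hpp₂ e (subset_of_mem_coords (hF V2) he₂)]

/-- if `G₁`, `G₂` are section hypergraphs of `G` (induced by `V₁` and `V₂`) with
`G₁ ∪ G₂ = G` and `G₁ ∩ G₂` a complete hypergraph, then the multilinear polytope of `G` is
exactly the set of points whose restriction to the coordinates of `G₁` lies in `MP(G₁)` and
whose restriction to the coordinates of `G₂` lies in `MP(G₂)`. -/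
theorem multilinear_polytope_decomposition {V : Type} [Fintype V] [DecidableEq V]
    (Vset V1 V2 : Finset V) (E : Finset (Finset V))
    (hcard : ∀ e ∈ E, 2 ≤ e.card) (hsub : ∀ e ∈ E, e ⊆ Vset)
    (hV1 : V1 ⊆ Vset) (hV2 : V2 ⊆ Vset)
    (hVunion : V1 ∪ V2 = Vset)
    (hEunion : (E.filter fun e => e ⊆ V1) ∪ (E.filter fun e => e ⊆ V2) = E)
    (hcomplete : ∀ e : Finset V, e ⊆ V1 ∩ V2 → 2 ≤ e.card → e ∈ E) :
    convexHull ℝ (MultilinearSet Vset E) =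
      convexHull ℝ (MultilinearSet V1 (E.filter fun e => e ⊆ V1)) ∩
        convexHull ℝ (MultilinearSet V2 (E.filter fun e => e ⊆ V2)) :=
  multilinear_polytope_decomposition_general Vset V1 V2 E hsub hV1 hV2 hVunion hEunion hcomplete
end

section
/- Let G'=(V',E') be a hypergraph and let v̄ ∉ V'. Let G be the hypergraph with node set V = V' ∪ {v̄} and edge set E = E' ∪ {{v, v̄} : v ∈ V'} ∪ {e ∪ {v̄} : e ∈ E'}. Suppose the multilinear polytope MP(G') is exactly the set of z' satisfying a finite system of inequalities ∑_{v∈V'} a^i_v z'_v + ∑_{e∈E'} a^i_e z'_e ≤ α_i for i ∈ I. Then MP(G) is exactly the set of z satisfying: 0 ≤ z_{v̄} ≤ 1; ∑_{v∈V'} a^i_v z_{{v,v̄}} + ∑_{e∈E'} a^i_e z_{e∪{v̄}} ≤ α_i z_{v̄} for all i ∈ I; and ∑_{v∈V'} a^i_v (z_v − z_{{v,v̄}}) + ∑_{e∈E'} a^i_e (z_e − z_{e∪{v̄}}) ≤ α_i (1 − z_{v̄}) for all i ∈ I. -/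
open Finset
open scoped Pointwise

lemma eq_zero_of_forall_add_mul_mem_Icc {b u : ℝ}
    (h : ∀ s : ℝ, 0 ≤ s → b + s * u ∈ Set.Icc (0 : ℝ) 1) : u = 0 := by
  by_contra hu
  have hs : |2 / |u| * u| = 2 := by
    rw [abs_mul, abs_div, abs_abs, abs_two, div_mul_cancel₀ _ (abs_ne_zero.2 hu)]
  obtain ⟨h0, h1⟩ := h 0 le_rfl
  obtain ⟨h2, h3⟩ := h (2 / |u|) (by positivity)
  rcases abs_cases (2 / |u| * u) with ⟨h, _⟩ | ⟨h, _⟩ <;> linarith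

section Multilinear

variable {V : Type} [DecidableEq V]

/-- Points of `MultilinearSet Vset E` are unconstrained off these coordinates. -/
def multilinearCoords (Vset : Finset V) (E : Finset (Finset V)) : Finset (Finset V) :=
  Vset.image ({·}) ∪ E

variable {Vset : Finset V} {E : Finset (Finset V)}

lemma mem_multilinearCoords {e : Finset V} :
    e ∈ multilinearCoords Vset E ↔ (∃ v ∈ Vset, {v} = e) ∨ e ∈ E := by
  simp [multilinearCoords]

lemma mem_multilinearSet_iff {z : Finset V → ℝ} :
    z ∈ MultilinearSet Vset E ↔ ∃ x : V → ℝ, (∀ v ∈ Vset, x v = 0 ∨ x v = 1) ∧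
      ∀ e ∈ multilinearCoords Vset E, z e = ∏ v ∈ e, x v := by
  simp only [MultilinearSet, Set.mem_ofPred_eq, mem_multilinearCoords]
  refine exists_congr fun x => and_congr_right fun _ => ⟨?_, ?_⟩
  · rintro ⟨hV, hE⟩ e (⟨v, hv, rfl⟩ | he)
    · rw [hV v hv, prod_singleton]
    · exact hE e he
  · intro h
    exact ⟨fun v hv => by rw [h {v} (.inl ⟨v, hv, rfl⟩), prod_singleton],
      fun e he => h e (.inr he)⟩

lemma prod_mem_multilinearSet {x : V → ℝ} (hx : ∀ v ∈ Vset, x v = 0 ∨ x v = 1) :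
    (fun e => ∏ v ∈ e, x v) ∈ MultilinearSet Vset E :=
  mem_multilinearSet_iff.2 ⟨x, hx, fun _ _ => rfl⟩

lemma mem_multilinearSet_of_eqOn {z z' : Finset V → ℝ} (hz : z ∈ MultilinearSet Vset E)
    (h : Set.EqOn z z' (multilinearCoords Vset E)) : z' ∈ MultilinearSet Vset E := by
  obtain ⟨x, hx, hz⟩ := mem_multilinearSet_iff.1 hz
  exact mem_multilinearSet_iff.2 ⟨x, hx, fun e he => (h he).symm.trans (hz e he)⟩

lemma mem_convexHull_multilinearSet_of_eqOn {z z' : Finset V → ℝ}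
    (hz : z ∈ convexHull ℝ (MultilinearSet Vset E))
    (h : Set.EqOn z z' (multilinearCoords Vset E)) :
    z' ∈ convexHull ℝ (MultilinearSet Vset E) := by
  have hshift : (z' - z) +ᵥ MultilinearSet Vset E ⊆ MultilinearSet Vset E := by
    rintro _ ⟨w, hw, rfl⟩
    refine mem_multilinearSet_of_eqOn hw fun e he => ?_
    simp [h he]
  have : z' ∈ (z' - z) +ᵥ convexHull ℝ (MultilinearSet Vset E) :=
    ⟨z, hz, by simp⟩
  rw [← convexHull_vadd] at this
  exact convexHull_mono hshift this

lemma subset_of_mem_multilinearCoords (hE : ∀ e ∈ E, e ⊆ Vset) {e : Finset V}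
    (he : e ∈ multilinearCoords Vset E) : e ⊆ Vset := by
  rcases mem_multilinearCoords.1 he with ⟨v, hv, rfl⟩ | he
  · exact singleton_subset_iff.2 hv
  · exact hE e he

lemma notMem_of_mem_multilinearCoords (hE : ∀ e ∈ E, e ⊆ Vset) {v : V} (hv : v ∉ Vset)
    {e : Finset V} (he : e ∈ multilinearCoords Vset E) : v ∉ e :=
  fun h => hv (subset_of_mem_multilinearCoords hE he h)

lemma nonempty_of_mem_multilinearCoords (hE : ∀ e ∈ E, 2 ≤ e.card) {e : Finset V}
    (he : e ∈ multilinearCoords Vset E) : e.Nonempty := by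
  rcases mem_multilinearCoords.1 he with ⟨v, -, rfl⟩ | he
  · exact singleton_nonempty v
  · exact card_pos.1 (by linarith [hE e he])

lemma mem_Icc_of_mem_convexHull_multilinearSet (hE : ∀ e ∈ E, e ⊆ Vset)
    {y : Finset V → ℝ} (hy : y ∈ convexHull ℝ (MultilinearSet Vset E))
    {e : Finset V} (he : e ∈ multilinearCoords Vset E) : y e ∈ Set.Icc (0 : ℝ) 1 := by
  have he_sub := subset_of_mem_multilinearCoords hE he
  refine convexHull_min (fun w hw => ?_)
    ((convex_Icc (0 : ℝ) 1).linear_preimage (LinearMap.proj e)) hy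
  obtain ⟨x, hx, hw⟩ := mem_multilinearSet_iff.1 hw
  have hx01 : ∀ v ∈ e, 0 ≤ x v ∧ x v ≤ 1 := fun v hv => by
    rcases hx v (he_sub hv) with h | h <;> simp [h]
  simp only [Set.mem_preimage, LinearMap.coe_proj, Function.eval, hw e he, Set.mem_Icc]
  exact ⟨prod_nonneg fun v hv => (hx01 v hv).1, prod_le_one (fun v hv => (hx01 v hv).1)
    fun v hv => (hx01 v hv).2⟩

lemma convexHull_multilinearSet_nonempty :
    (convexHull ℝ (MultilinearSet Vset E)).Nonempty :=
  ⟨_, subset_convexHull ℝ _ (prod_mem_multilinearSet (x := 0) fun _ _ => .inl rfl)⟩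

section Polyhedron

variable {ι : Type} {ℓ : ι → (Finset V → ℝ) →ₗ[ℝ] ℝ} {α : ι → ℝ}

/-- `u` is a recession direction of the polyhedron, which is bounded on these coordinates. -/
lemma eqOn_zero_of_map_nonpos (hE : ∀ e ∈ E, e ⊆ Vset)
    (hP : convexHull ℝ (MultilinearSet Vset E) = {y | ∀ i, ℓ i y ≤ α i})
    {u : Finset V → ℝ} (hu : ∀ i, ℓ i u ≤ 0) : Set.EqOn u 0 (multilinearCoords Vset E) := by
  obtain ⟨p, hp⟩ := convexHull_multilinearSet_nonempty (Vset := Vset) (E := E)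
  have hray : ∀ s : ℝ, 0 ≤ s → p + s • u ∈ convexHull ℝ (MultilinearSet Vset E) := by
    rw [hP] at hp ⊢
    intro s hs i
    rw [map_add, map_smul, smul_eq_mul]
    linarith [hp i, mul_nonpos_of_nonneg_of_nonpos hs (hu i)]
  intro e he
  exact eq_zero_of_forall_add_mul_mem_Icc fun s hs =>
    mem_Icc_of_mem_convexHull_multilinearSet hE (hray s hs) he

lemma exists_mem_convexHull_eqOn_smul (hE : ∀ e ∈ E, e ⊆ Vset)
    (hP : convexHull ℝ (MultilinearSet Vset E) = {y | ∀ i, ℓ i y ≤ α i})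
    {t : ℝ} (ht : 0 ≤ t) {u : Finset V → ℝ} (hu : ∀ i, ℓ i u ≤ α i * t) :
    ∃ y ∈ convexHull ℝ (MultilinearSet Vset E), Set.EqOn u (t • y) (multilinearCoords Vset E) := by
  rcases ht.eq_or_lt with rfl | ht
  · obtain ⟨p, hp⟩ := convexHull_multilinearSet_nonempty (Vset := Vset) (E := E)
    refine ⟨p, hp, ?_⟩
    rw [zero_smul]
    exact eqOn_zero_of_map_nonpos hE hP fun i => by simpa using hu i
  · refine ⟨t⁻¹ • u, ?_, by rw [smul_inv_smul₀ ht.ne']; exact Set.eqOn_refl _ _⟩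
    rw [hP]
    intro i
    rw [map_smul, smul_eq_mul, inv_mul_le_iff₀ ht, mul_comm]
    exact hu i

end Polyhedron

end Multilinear

section Lift

variable {V : Type} [DecidableEq V] {V' : Finset V} {E' : Finset (Finset V)} {vbar : V}

def liftedEdges (V' : Finset V) (E' : Finset (Finset V)) (vbar : V) : Finset (Finset V) :=
  E' ∪ V'.image (fun v => ({v, vbar} : Finset V)) ∪ E'.image (fun e => insert vbar e)

lemma mem_multilinearCoords_lift_of_mem {e : Finset V} (he : e ∈ multilinearCoords V' E') :
    e ∈ multilinearCoords (insert vbar V') (liftedEdges V' E' vbar) := by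
  rcases mem_multilinearCoords.1 he with ⟨v, hv, rfl⟩ | he
  · exact mem_multilinearCoords.2 (.inl ⟨v, mem_insert_of_mem hv, rfl⟩)
  · exact mem_multilinearCoords.2 (.inr (mem_union_left _ (mem_union_left _ he)))

lemma insert_mem_multilinearCoords_lift {e : Finset V} (he : e ∈ multilinearCoords V' E') :
    insert vbar e ∈ multilinearCoords (insert vbar V') (liftedEdges V' E' vbar) := by
  refine mem_multilinearCoords.2 (.inr ?_)
  rcases mem_multilinearCoords.1 he with ⟨v, hv, rfl⟩ | he
  · exact mem_union_left _ (mem_union_right _ (mem_image.2 ⟨v, hv, pair_comm v vbar⟩))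
  · exact mem_union_right _ (mem_image_of_mem _ he)

lemma mem_multilinearCoords_lift {e : Finset V}
    (he : e ∈ multilinearCoords (insert vbar V') (liftedEdges V' E' vbar)) :
    e = {vbar} ∨ e ∈ multilinearCoords V' E' ∨
      ∃ e' ∈ multilinearCoords V' E', insert vbar e' = e := by
  simp only [liftedEdges, mem_multilinearCoords, mem_union, mem_image, mem_insert] at he ⊢
  rcases he with ⟨v, rfl | hv, rfl⟩ | (he | ⟨v, hv, rfl⟩) | ⟨e', he', rfl⟩
  · exact .inl rfl
  · exact .inr (.inl (.inl ⟨v, hv, rfl⟩))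
  · exact .inr (.inl (.inr he))
  · exact .inr (.inr ⟨{v}, .inl ⟨v, hv, rfl⟩, pair_comm vbar v⟩)
  · exact .inr (.inr ⟨e', .inr he', rfl⟩)

/-- For `b ∈ {0, 1}` this maps `MP(G')` into the face `z {vbar} = b` of `MP(G)`. -/
def liftPoint (vbar : V) (b : ℝ) (y : Finset V → ℝ) : Finset V → ℝ :=
  fun e => if e = {vbar} then b else if vbar ∈ e then b * y (e.erase vbar) else y e

lemma liftPoint_of_notMem {b : ℝ} {y : Finset V → ℝ} {e : Finset V} (he : vbar ∉ e) :
    liftPoint vbar b y e = y e := by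
  rw [liftPoint, if_neg (by rintro rfl; exact he (mem_singleton_self vbar)), if_neg he]

lemma liftPoint_insert {b : ℝ} {y : Finset V → ℝ} {e : Finset V} (he : vbar ∉ e)
    (hne : e.Nonempty) : liftPoint vbar b y (insert vbar e) = b * y e := by
  have hsing : insert vbar e ≠ {vbar} := fun h => by
    obtain ⟨u, hu⟩ := hne
    have : u = vbar := mem_singleton.1 (h ▸ mem_insert_of_mem hu)
    exact he (this ▸ hu)
  rw [liftPoint, if_neg hsing, if_pos (mem_insert_self vbar e), erase_insert he]

lemma liftPoint_mem_multilinearSet (hE' : ∀ e ∈ E', e ⊆ V' ∧ 2 ≤ e.card) (hvbar : vbar ∉ V')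
    {b : ℝ} (hb : b = 0 ∨ b = 1) {y : Finset V → ℝ} (hy : y ∈ MultilinearSet V' E') :
    liftPoint vbar b y ∈ MultilinearSet (insert vbar V') (liftedEdges V' E' vbar) := by
  obtain ⟨x, hx, hy⟩ := mem_multilinearSet_iff.1 hy
  have hvbar_notMem : ∀ e ∈ multilinearCoords V' E', vbar ∉ e := fun _ =>
    notMem_of_mem_multilinearCoords (fun e he => (hE' e he).1) hvbar
  have hprod : ∀ e ∈ multilinearCoords V' E',
      ∏ v ∈ e, Function.update x vbar b v = ∏ v ∈ e, x v := fun e he =>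
    prod_update_of_notMem (hvbar_notMem e he) _ _
  refine mem_multilinearSet_iff.2 ⟨Function.update x vbar b, fun v hv => ?_, fun e he => ?_⟩
  · rcases mem_insert.1 hv with rfl | hv
    · simpa using hb
    · rw [Function.update_of_ne (ne_of_mem_of_not_mem hv hvbar)]
      exact hx v hv
  · rcases mem_multilinearCoords_lift he with rfl | he | ⟨e', he', rfl⟩
    · simp [liftPoint]
    · rw [liftPoint_of_notMem (hvbar_notMem e he), hy e he, hprod e he]
    · have hne := nonempty_of_mem_multilinearCoords (fun e he => (hE' e he).2) he'
      rw [liftPoint_insert (hvbar_notMem e' he') hne, hy e' he', prod_insert (hvbar_notMem e' he'),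
        Function.update_self, hprod e' he']

lemma liftPoint_add_smul {b p q : ℝ} (hpq : p + q = 1) (y₁ y₂ : Finset V → ℝ) :
    liftPoint vbar b (p • y₁ + q • y₂) = p • liftPoint vbar b y₁ + q • liftPoint vbar b y₂ := by
  funext e
  simp only [liftPoint, Pi.add_apply, Pi.smul_apply, smul_eq_mul]
  split_ifs
  · rw [← add_mul, hpq, one_mul]
  · ring
  · rfl

lemma liftPoint_mem_convexHull (hE' : ∀ e ∈ E', e ⊆ V' ∧ 2 ≤ e.card) (hvbar : vbar ∉ V')
    {b : ℝ} (hb : b = 0 ∨ b = 1) {y : Finset V → ℝ}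
    (hy : y ∈ convexHull ℝ (MultilinearSet V' E')) :
    liftPoint vbar b y ∈
      convexHull ℝ (MultilinearSet (insert vbar V') (liftedEdges V' E' vbar)) := by
  refine convexHull_min (t := {y | liftPoint vbar b y ∈ convexHull ℝ _})
    (fun y hy => subset_convexHull ℝ _ (liftPoint_mem_multilinearSet hE' hvbar hb hy)) ?_ hy
  intro y₁ h₁ y₂ h₂ p q hp hq hpq
  simp only [Set.mem_ofPred_eq, liftPoint_add_smul hpq]
  exact convex_convexHull ℝ _ h₁ h₂ hp hq hpq

lemma eqOn_liftPoint_combination (hE' : ∀ e ∈ E', e ⊆ V' ∧ 2 ≤ e.card) (hvbar : vbar ∉ V')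
    {z y₁ y₀ : Finset V → ℝ}
    (h₁ : Set.EqOn (z ∘ insert vbar) (z {vbar} • y₁) (multilinearCoords V' E'))
    (h₀ : Set.EqOn (z - z ∘ insert vbar) ((1 - z {vbar}) • y₀) (multilinearCoords V' E')) :
    Set.EqOn z (z {vbar} • liftPoint vbar 1 y₁ + (1 - z {vbar}) • liftPoint vbar 0 y₀)
      (multilinearCoords (insert vbar V') (liftedEdges V' E' vbar)) := by
  have hvbar_notMem : ∀ e ∈ multilinearCoords V' E', vbar ∉ e := fun _ =>
    notMem_of_mem_multilinearCoords (fun e he => (hE' e he).1) hvbar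
  intro e he
  rcases mem_multilinearCoords_lift he with rfl | he | ⟨e', he', rfl⟩
  · simp [liftPoint]
  · have h₁ := h₁ he
    have h₀ := h₀ he
    simp only [Function.comp_apply, Pi.smul_apply, Pi.sub_apply, smul_eq_mul] at h₁ h₀
    simp only [Pi.add_apply, Pi.smul_apply, smul_eq_mul,
      liftPoint_of_notMem (hvbar_notMem e he)]
    linarith
  · have hne := nonempty_of_mem_multilinearCoords (fun e he => (hE' e he).2) he'
    simpa [liftPoint_insert (hvbar_notMem e' he') hne] using h₁ he'

lemma exists_eqOn_smul_of_mem_multilinearSet_lift (hE' : ∀ e ∈ E', e ⊆ V') (hvbar : vbar ∉ V')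
    {z : Finset V → ℝ} (hz : z ∈ MultilinearSet (insert vbar V') (liftedEdges V' E' vbar)) :
    ∃ b : ℝ, (b = 0 ∨ b = 1) ∧ z {vbar} = b ∧ ∃ y ∈ MultilinearSet V' E',
      Set.EqOn (z ∘ insert vbar) (b • y) (multilinearCoords V' E') ∧
      Set.EqOn (z - z ∘ insert vbar) ((1 - b) • y) (multilinearCoords V' E') := by
  obtain ⟨x, hx, hz⟩ := mem_multilinearSet_iff.1 hz
  have hzvbar : z {vbar} = x vbar := by
    rw [hz {vbar} (mem_multilinearCoords.2 (.inl ⟨vbar, mem_insert_self _ _, rfl⟩)),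
      prod_singleton]
  have hzinsert : ∀ e ∈ multilinearCoords V' E', z (insert vbar e) = x vbar * ∏ v ∈ e, x v :=
    fun e he => by
      rw [hz _ (insert_mem_multilinearCoords_lift he),
        prod_insert (notMem_of_mem_multilinearCoords hE' hvbar he)]
  refine ⟨x vbar, hx vbar (mem_insert_self _ _), hzvbar, fun e => ∏ v ∈ e, x v,
    prod_mem_multilinearSet fun v hv => hx v (mem_insert_of_mem hv), fun e he => ?_,
    fun e he => ?_⟩
  · simp [hzinsert e he]
  · simp [hzinsert e he, hz e (mem_multilinearCoords_lift_of_mem he)]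
    ring

variable {ι : Type}

/-- The system of the theorem, with `z ∘ insert vbar` and `z - z ∘ insert vbar` in place of
the coordinates `z_{e ∪ {v̄}}` and `z_e - z_{e ∪ {v̄}}`. -/
def liftedPolyhedron (ℓ : ι → (Finset V → ℝ) →ₗ[ℝ] ℝ) (α : ι → ℝ) (vbar : V) :
    Set (Finset V → ℝ) :=
  {z | z {vbar} ∈ Set.Icc 0 1 ∧ (∀ i, ℓ i (z ∘ insert vbar) ≤ α i * z {vbar}) ∧
    ∀ i, ℓ i (z - z ∘ insert vbar) ≤ α i * (1 - z {vbar})}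

lemma convex_liftedPolyhedron (ℓ : ι → (Finset V → ℝ) →ₗ[ℝ] ℝ) (α : ι → ℝ) (vbar : V) :
    Convex ℝ (liftedPolyhedron ℓ α vbar) := by
  rintro z₁ ⟨hI₁, h₁, h₁'⟩ z₂ ⟨hI₂, h₂, h₂'⟩ p q hp hq hpq
  have hcomp : (p • z₁ + q • z₂) ∘ insert vbar = p • (z₁ ∘ insert vbar) + q • (z₂ ∘ insert vbar) :=
    rfl
  refine ⟨convex_Icc 0 1 hI₁ hI₂ hp hq hpq, fun i => ?_, fun i => ?_⟩
  · simp only [hcomp, map_add, map_smul, smul_eq_mul, Pi.add_apply, Pi.smul_apply]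
    linarith [mul_le_mul_of_nonneg_left (h₁ i) hp, mul_le_mul_of_nonneg_left (h₂ i) hq]
  · have hsub : p • z₁ + q • z₂ - (p • z₁ + q • z₂) ∘ insert vbar =
        p • (z₁ - z₁ ∘ insert vbar) + q • (z₂ - z₂ ∘ insert vbar) := by
      rw [hcomp, smul_sub, smul_sub]; abel
    simp only [hsub, map_add, map_smul, smul_eq_mul, Pi.add_apply, Pi.smul_apply]
    have hα : α i = p * α i + q * α i := by rw [← add_mul, hpq, one_mul]
    linarith [mul_le_mul_of_nonneg_left (h₁' i) hp, mul_le_mul_of_nonneg_left (h₂' i) hq]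

theorem convexHull_multilinearSet_lift (hE' : ∀ e ∈ E', e ⊆ V' ∧ 2 ≤ e.card)
    (hvbar : vbar ∉ V') {ℓ : ι → (Finset V → ℝ) →ₗ[ℝ] ℝ} {α : ι → ℝ}
    (hℓ : ∀ i y y', Set.EqOn y y' (multilinearCoords V' E') → ℓ i y = ℓ i y')
    (hP : convexHull ℝ (MultilinearSet V' E') = {y | ∀ i, ℓ i y ≤ α i}) :
    convexHull ℝ (MultilinearSet (insert vbar V') (liftedEdges V' E' vbar)) =
      liftedPolyhedron ℓ α vbar := by
  have hsub : ∀ e ∈ E', e ⊆ V' := fun e he => (hE' e he).1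
  refine (convexHull_min (fun z hz => ?_) (convex_liftedPolyhedron ℓ α vbar)).antisymm ?_
  · obtain ⟨b, hb, hzb, y, hy, h₁, h₀⟩ := exists_eqOn_smul_of_mem_multilinearSet_lift hsub hvbar hz
    have hyP : ∀ i, ℓ i y ≤ α i := by
      simpa [hP] using subset_convexHull ℝ (MultilinearSet V' E') hy
    have hb01 : 0 ≤ b ∧ b ≤ 1 := by rcases hb with rfl | rfl <;> norm_num
    refine ⟨hzb ▸ hb01, fun i => ?_, fun i => ?_⟩
    · rw [hℓ i _ _ h₁, map_smul, smul_eq_mul, hzb, mul_comm (α i)]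
      exact mul_le_mul_of_nonneg_left (hyP i) hb01.1
    · rw [hℓ i _ _ h₀, map_smul, smul_eq_mul, hzb, mul_comm (α i)]
      exact mul_le_mul_of_nonneg_left (hyP i) (sub_nonneg.2 hb01.2)
  · rintro z ⟨⟨h0, h1⟩, h₁, h₀⟩
    obtain ⟨y₁, hy₁, e₁⟩ := exists_mem_convexHull_eqOn_smul hsub hP h0 h₁
    obtain ⟨y₀, hy₀, e₀⟩ := exists_mem_convexHull_eqOn_smul hsub hP (sub_nonneg.2 h1) h₀
    refine mem_convexHull_multilinearSet_of_eqOn (convex_convexHull ℝ _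
      (liftPoint_mem_convexHull hE' hvbar (.inr rfl) hy₁)
      (liftPoint_mem_convexHull hE' hvbar (.inl rfl) hy₀) h0 (sub_nonneg.2 h1)
      (add_sub_cancel _ _)) (eqOn_liftPoint_combination hE' hvbar e₁ e₀).symm

end Lift

section CoordForm

variable {V : Type}

/-- The left-hand side `∑_{v ∈ Vset} c_v y_v + ∑_{e ∈ E} c_e y_e` of an inequality on `MP(G)`. -/
def coordForm (Vset : Finset V) (E : Finset (Finset V)) (c : V → ℝ) (cE : Finset V → ℝ) :
    (Finset V → ℝ) →ₗ[ℝ] ℝ where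
  toFun y := ∑ v ∈ Vset, c v * y {v} + ∑ e ∈ E, cE e * y e
  map_add' y y' := by
    simp only [Pi.add_apply, mul_add, sum_add_distrib]
    ring
  map_smul' s y := by
    simp only [Pi.smul_apply, smul_eq_mul, RingHom.id_apply, mul_add, mul_sum]
    congr 1 <;> exact sum_congr rfl fun _ _ => by ring

lemma coordForm_apply (Vset : Finset V) (E : Finset (Finset V)) (c : V → ℝ)
    (cE : Finset V → ℝ) (y : Finset V → ℝ) :
    coordForm Vset E c cE y = ∑ v ∈ Vset, c v * y {v} + ∑ e ∈ E, cE e * y e :=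
  rfl

lemma coordForm_congr [DecidableEq V] {Vset : Finset V} {E : Finset (Finset V)} (c : V → ℝ)
    (cE : Finset V → ℝ) {y y' : Finset V → ℝ} (h : Set.EqOn y y' (multilinearCoords Vset E)) :
    coordForm Vset E c cE y = coordForm Vset E c cE y' := by
  simp only [coordForm_apply]
  congr 1 <;> refine sum_congr rfl fun _ he => congrArg _ (h ?_)
  · exact mem_multilinearCoords.2 (.inl ⟨_, he, rfl⟩)
  · exact mem_multilinearCoords.2 (.inr he)

end CoordForm

theorem multilinear_polytope_lifting_general {V : Type} [DecidableEq V]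
    (V' : Finset V) (E' : Finset (Finset V))
    (hE' : ∀ e ∈ E', e ⊆ V' ∧ 2 ≤ e.card)
    (vbar : V) (hvbar : vbar ∉ V')
    {ι : Type}
    (a : ι → V → ℝ) (aE : ι → Finset V → ℝ) (α : ι → ℝ)
    (hdesc : convexHull ℝ (MultilinearSet V' E') =
      {z : Finset V → ℝ | ∀ i : ι,
        (∑ v ∈ V', a i v * z {v}) + (∑ e ∈ E', aE i e * z e) ≤ α i}) :
    convexHull ℝ (MultilinearSet (insert vbar V')
        (E' ∪ V'.image (fun v => ({v, vbar} : Finset V)) ∪ E'.image (fun e => insert vbar e))) =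
      {z : Finset V → ℝ |
        (0 ≤ z {vbar} ∧ z {vbar} ≤ 1) ∧
        (∀ i : ι, (∑ v ∈ V', a i v * z {v, vbar}) + (∑ e ∈ E', aE i e * z (insert vbar e)) ≤
            α i * z {vbar}) ∧
        ∀ i : ι, (∑ v ∈ V', a i v * (z {v} - z {v, vbar})) +
            (∑ e ∈ E', aE i e * (z e - z (insert vbar e))) ≤ α i * (1 - z {vbar})} := by
  have hpair : ∀ v : V, insert vbar {v} = ({v, vbar} : Finset V) := fun v => pair_comm vbar v
  refine (convexHull_multilinearSet_lift (ℓ := fun i => coordForm V' E' (a i) (aE i)) hE' hvbar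
    (fun i _ _ => coordForm_congr (a i) (aE i)) hdesc).trans ?_
  ext z
  simp only [liftedPolyhedron, coordForm_apply, Function.comp_apply, Pi.sub_apply, hpair,
    Set.mem_Icc, Set.mem_ofPred_eq]

/-- lifting an inequality description of `MP(G')` to a description of `MP(G)`,
where `G` is obtained from `G' = (V', E')` by a new node `v̄`, the pair edges `{v, v̄}`
(`v ∈ V'`) and the lifted edges `e ∪ {v̄}` (`e ∈ E'`). -/
theorem multilinear_polytope_lifting {V : Type} [Fintype V] [DecidableEq V]
    (V' : Finset V) (E' : Finset (Finset V))
    (hE' : ∀ e ∈ E', e ⊆ V' ∧ 2 ≤ e.card)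
    (vbar : V) (hvbar : vbar ∉ V')
    {ι : Type} [Fintype ι]
    (a : ι → V → ℝ) (aE : ι → Finset V → ℝ) (α : ι → ℝ)
    (hdesc : convexHull ℝ (MultilinearSet V' E') =
      {z : Finset V → ℝ | ∀ i : ι,
        (∑ v ∈ V', a i v * z {v}) + (∑ e ∈ E', aE i e * z e) ≤ α i}) :
    convexHull ℝ (MultilinearSet (insert vbar V')
        (E' ∪ V'.image (fun v => ({v, vbar} : Finset V)) ∪ E'.image (fun e => insert vbar e))) =
      {z : Finset V → ℝ |
        (0 ≤ z {vbar} ∧ z {vbar} ≤ 1) ∧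
        (∀ i : ι, (∑ v ∈ V', a i v * z {v, vbar}) + (∑ e ∈ E', aE i e * z (insert vbar e)) ≤
            α i * z {vbar}) ∧
        ∀ i : ι, (∑ v ∈ V', a i v * (z {v} - z {v, vbar})) +
            (∑ e ∈ E', aE i e * (z e - z (insert vbar e))) ≤ α i * (1 - z {vbar})} :=
  multilinear_polytope_lifting_general V' E' hE' vbar hvbar a aE α hdesc
end
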